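/- Let (A, B) be a homogeneous pair of strong cliques in a trigraph G, and let (A1, B1) be a square-connected homogeneous pair of strong cliques in G with A1 a proper subset of A and B1 ⊆ B. If no square of G contained in A ∪ B intersects both A1 ∪ B1 and (A ∪ B) \ (A1 ∪ B1), then every vertex of A \ A1 is strongly complete or strongly anticomplete to B1, and every vertex of B \ B1 is strongly complete or strongly anticomplete to A1. -/
import Mathlib


/-- A trigraph on a vertex type `V`: a symmetric adjacency function with values in
`{1, 0, -1}`, zero on the diagonal, such that semiedges form a matching. -/
structure Trigraph (V : Type) where
  θ : V → V → ℤ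
  range_mem : ∀ u v, θ u v = 1 ∨ θ u v = 0 ∨ θ u v = -1
  symm : ∀ u v, θ u v = θ v u
  refl_zero : ∀ v, θ v v = 0
  semi_matching : ∀ u v w : V, u ≠ v → u ≠ w → v ≠ w → θ u v = 0 → θ u w ≠ 0

namespace Trigraph

variable {V V' V'' : Type}

/-- `u` and `v` are strongly adjacent. -/
def StrongAdj (G : Trigraph V) (u v : V) : Prop := G.θ u v = 1

/-- Distinct `u` and `v` are semiadjacent. -/
def SemiAdj (G : Trigraph V) (u v : V) : Prop := u ≠ v ∧ G.θ u v = 0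

/-- Distinct `u` and `v` are adjacent. -/
def Adj (G : Trigraph V) (u v : V) : Prop := u ≠ v ∧ (G.θ u v = 1 ∨ G.θ u v = 0)

/-- Distinct `u` and `v` are antiadjacent. -/
def AntiAdj (G : Trigraph V) (u v : V) : Prop := u ≠ v ∧ (G.θ u v = 0 ∨ G.θ u v = -1)

/-- `u` and `v` are strongly antiadjacent. -/
def StrongAntiAdj (G : Trigraph V) (u v : V) : Prop := G.θ u v = -1

/-- `X` is strongly complete to `Y`. -/
def StronglyComplete (G : Trigraph V) (X Y : Set V) : Prop :=
  ∀ u ∈ X, ∀ v ∈ Y, G.StrongAdj u v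

/-- `X` is strongly anticomplete to `Y`. -/
def StronglyAnticomplete (G : Trigraph V) (X Y : Set V) : Prop :=
  ∀ u ∈ X, ∀ v ∈ Y, G.StrongAntiAdj u v

/-- A strong clique: pairwise strongly adjacent vertices. -/
def IsStrongClique (G : Trigraph V) (K : Set V) : Prop := K.Pairwise G.StrongAdj

/-- A stable set: pairwise antiadjacent vertices. -/
def IsStableSet (G : Trigraph V) (S : Set V) : Prop := S.Pairwise G.AntiAdj

/-- The neighbourhood of a vertex: the set of vertices adjacent to it. -/
def neighborhood (G : Trigraph V) (v : V) : Set V := {u | G.Adj v u}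

/-- Claw-free: no vertex has three pairwise antiadjacent vertices in its neighbourhood. -/
def ClawFree (G : Trigraph V) : Prop :=
  ¬ ∃ v a b c : V, G.Adj v a ∧ G.Adj v b ∧ G.Adj v c ∧
    G.AntiAdj a b ∧ G.AntiAdj a c ∧ G.AntiAdj b c

/-- Cobipartite: the vertex set is the union of two strong cliques. -/
def Cobipartite (G : Trigraph V) : Prop :=
  ∃ K1 K2 : Set V, G.IsStrongClique K1 ∧ G.IsStrongClique K2 ∧ K1 ∪ K2 = Set.univ

/-- Quasi-line: the neighbourhood of every vertex is the union of two strong cliques. -/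
def QuasiLine (G : Trigraph V) : Prop :=
  ∀ v : V, ∃ K1 K2 : Set V, G.IsStrongClique K1 ∧ G.IsStrongClique K2 ∧
    G.neighborhood v = K1 ∪ K2

/-- Connected: any two vertices are joined by a sequence of consecutively adjacent vertices. -/
def Connected (G : Trigraph V) : Prop :=
  ∀ u v : V, Relation.ReflTransGen G.Adj u v

/-- Non-degenerate: quasi-line and not cobipartite, or claw-free with stability number ≥ 3. -/
def NonDegenerate (G : Trigraph V) : Prop :=
  (G.QuasiLine ∧ ¬ G.Cobipartite) ∨
  (G.ClawFree ∧ ∃ S : Set V, G.IsStableSet S ∧ 3 ≤ S.ncard)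

/-- A homogeneous set: `|V| > |X| ≥ 2` and every vertex outside `X` is strongly complete
or strongly anticomplete to `X`. -/
def HomogeneousSet (G : Trigraph V) (X : Set V) : Prop :=
  2 ≤ X.ncard ∧ X ≠ Set.univ ∧
  ∀ v ∉ X, G.StronglyComplete {v} X ∨ G.StronglyAnticomplete {v} X

/-- `v1 v2 v3 v4` is a square: the pairs `v1v3`, `v2v4` are antiadjacent and the other
four pairs are adjacent. -/
def IsSquare (G : Trigraph V) (v1 v2 v3 v4 : V) : Prop :=
  G.AntiAdj v1 v3 ∧ G.AntiAdj v2 v4 ∧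
  G.Adj v1 v2 ∧ G.Adj v2 v3 ∧ G.Adj v3 v4 ∧ G.Adj v4 v1

/-- `X` contains a square. -/
def HasSquareIn (G : Trigraph V) (X : Set V) : Prop :=
  ∃ v1 v2 v3 v4 : V, G.IsSquare v1 v2 v3 v4 ∧ ({v1, v2, v3, v4} : Set V) ⊆ X

/-- Homogeneous pair of strong cliques `(A, B)`. -/
def HPOSC (G : Trigraph V) (A B : Set V) : Prop :=
  A.Nonempty ∧ B.Nonempty ∧ Disjoint A B ∧
  G.IsStrongClique A ∧ G.IsStrongClique B ∧
  ¬ (∃ a b : V, A = {a} ∧ B = {b}) ∧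
  ∀ v ∉ A ∪ B,
    (G.StronglyComplete {v} A ∨ G.StronglyAnticomplete {v} A) ∧
    (G.StronglyComplete {v} B ∨ G.StronglyAnticomplete {v} B)

/-- Deletion-minimal homogeneous pair of strong cliques. -/
def DeletionMinimal (G : Trigraph V) (A B : Set V) : Prop :=
  G.HPOSC A B ∧ G.HasSquareIn (A ∪ B) ∧
  (∀ a ∈ A, ¬ G.StronglyComplete {a} B ∧ ¬ G.StronglyAnticomplete {a} B) ∧
  (∀ b ∈ B, ¬ G.StronglyComplete {b} A ∧ ¬ G.StronglyAnticomplete {b} A)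

/-- There is a square contained in `X` intersecting both `S1` and `S2`. -/
def SquareMeets (G : Trigraph V) (X S1 S2 : Set V) : Prop :=
  ∃ v1 v2 v3 v4 : V, G.IsSquare v1 v2 v3 v4 ∧ ({v1, v2, v3, v4} : Set V) ⊆ X ∧
    (({v1, v2, v3, v4} : Set V) ∩ S1).Nonempty ∧
    (({v1, v2, v3, v4} : Set V) ∩ S2).Nonempty

/-- Square-connected homogeneous pair of strong cliques. -/
def SquareConnected (G : Trigraph V) (A B : Set V) : Prop :=
  G.HPOSC A B ∧
  (∀ A' A'' : Set V, A'.Nonempty → A''.Nonempty → A' ∪ A'' = A → Disjoint A' A'' →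
    G.SquareMeets (A ∪ B) A' A'') ∧
  (∀ B' B'' : Set V, B'.Nonempty → B''.Nonempty → B' ∪ B'' = B → Disjoint B' B'' →
    G.SquareMeets (A ∪ B) B' B'')

/-- Inclusion-maximal square-connected homogeneous pair of strong cliques. -/
def MaxSquareConnected (G : Trigraph V) (A B : Set V) : Prop :=
  G.SquareConnected A B ∧
  ∀ A' B' : Set V, G.SquareConnected A' B' → A ⊆ A' → B ⊆ B' → A' = A ∧ B' = B

/-- Two homogeneous pairs have skew intersection if a part of one intersects both
parts of the other. -/
def SkewIntersection (A1 B1 A2 B2 : Set V) : Prop :=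
  ((A1 ∩ A2).Nonempty ∧ (A1 ∩ B2).Nonempty) ∨
  ((B1 ∩ A2).Nonempty ∧ (B1 ∩ B2).Nonempty) ∨
  ((A2 ∩ A1).Nonempty ∧ (A2 ∩ B1).Nonempty) ∨
  ((B2 ∩ A1).Nonempty ∧ (B2 ∩ B1).Nonempty)

/-- Laminar: contains no square-connected homogeneous pair of strong cliques. -/
def Laminar (G : Trigraph V) : Prop := ¬ ∃ A B : Set V, G.SquareConnected A B

/-- `G` is a thickening of `G'` via the map `I` (equivalently, `G'` is an antithickening
of `G`): the `I v` are nonempty strong cliques partitioning `V(G)` respecting adjacency. -/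
def IsThickening (G : Trigraph V) (G' : Trigraph V') (I : V' → Set V) : Prop :=
  (∀ v : V', (I v).Nonempty ∧ G.IsStrongClique (I v)) ∧
  (∀ u v : V', u ≠ v → Disjoint (I u) (I v)) ∧
  (⋃ v : V', I v) = Set.univ ∧
  ∀ u v : V', u ≠ v →
    (G'.StrongAdj u v → G.StronglyComplete (I u) (I v)) ∧
    (G'.StrongAntiAdj u v → G.StronglyAnticomplete (I u) (I v)) ∧
    (G'.SemiAdj u v →
      ¬ G.StronglyComplete (I u) (I v) ∧ ¬ G.StronglyAnticomplete (I u) (I v))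

/-- `G'` (with thickening map `I`) is an optimal antithickening of `G`: it is a laminar
antithickening with the maximum possible number of vertices. -/
def OptimalAntithickening (G : Trigraph V) (G' : Trigraph V') (I : V' → Set V) : Prop :=
  G.IsThickening G' I ∧ G'.Laminar ∧
  ∀ (W : Type) (H : Trigraph W) (J : W → Set V),
    G.IsThickening H J → H.Laminar → Nat.card W ≤ Nat.card V'

/-- Isomorphism of trigraphs. -/
def Isomorphic (G1 : Trigraph V) (G2 : Trigraph V') : Prop :=
  ∃ f : V ≃ V', ∀ u v : V, G2.θ (f u) (f v) = G1.θ u v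

section Aux
variable {V : Type} {G : Trigraph V}

lemma Adj.symm' {u v : V} (h : G.Adj u v) : G.Adj v u :=
  ⟨h.1.symm, by rw [G.symm]; exact h.2⟩

lemma AntiAdj.symm' {u v : V} (h : G.AntiAdj u v) : G.AntiAdj v u :=
  ⟨h.1.symm, by rw [G.symm]; exact h.2⟩

lemma IsSquare.rot {v1 v2 v3 v4 : V} (h : G.IsSquare v1 v2 v3 v4) :
    G.IsSquare v2 v3 v4 v1 :=
  ⟨h.2.1, h.1.symm', h.2.2.2.1, h.2.2.2.2.1, h.2.2.2.2.2, h.2.2.1⟩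

lemma IsSquare.refl' {v1 v2 v3 v4 : V} (h : G.IsSquare v1 v2 v3 v4) :
    G.IsSquare v2 v1 v4 v3 :=
  ⟨h.2.1, h.1, h.2.2.1.symm', h.2.2.2.2.2.symm', h.2.2.2.2.1.symm', h.2.2.2.1.symm'⟩

lemma IsSquare.extend {v1 v2 v3 v4 w : V} (hsq : G.IsSquare v1 v2 v3 v4)
    (h1 : G.Adj w v1) (h3 : G.Adj w v3) (h2 : G.AntiAdj w v2) :
    G.IsSquare w v3 v2 v1 :=
  ⟨h2, hsq.1.symm', h3, hsq.2.2.2.1.symm', hsq.2.2.1.symm', h1.symm'⟩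

lemma no_square_clique_singleton {K : Set V} (hK : G.IsStrongClique K) {b0 v1 v2 v3 v4 : V}
    (hsq : G.IsSquare v1 v2 v3 v4) (hsub : ({v1, v2, v3, v4} : Set V) ⊆ K ∪ {b0}) :
    False := by
  have h13 : v1 = b0 ∨ v3 = b0 := by
    by_contra hc
    push_neg at hc
    have h1 : v1 ∈ K := by
      rcases hsub (show v1 ∈ ({v1,v2,v3,v4} : Set V) by simp) with h | h
      · exact h
      · exact absurd h hc.1
    have h3 : v3 ∈ K := by
      rcases hsub (show v3 ∈ ({v1,v2,v3,v4} : Set V) by simp) with h | h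
      · exact h
      · exact absurd h hc.2
    have hs : G.θ v1 v3 = 1 := hK h1 h3 hsq.1.1
    rcases hsq.1.2 with h | h <;> omega
  have h24 : v2 = b0 ∨ v4 = b0 := by
    by_contra hc
    push_neg at hc
    have h2 : v2 ∈ K := by
      rcases hsub (show v2 ∈ ({v1,v2,v3,v4} : Set V) by simp) with h | h
      · exact h
      · exact absurd h hc.1
    have h4 : v4 ∈ K := by
      rcases hsub (show v4 ∈ ({v1,v2,v3,v4} : Set V) by simp) with h | h
      · exact h
      · exact absurd h hc.2
    have hs : G.θ v2 v4 = 1 := hK h2 h4 hsq.2.1.1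
    rcases hsq.2.1.2 with h | h <;> omega
  rcases h13 with h | h <;> rcases h24 with h' | h'
  · exact hsq.2.2.1.1 (h.trans h'.symm)
  · exact hsq.2.2.2.2.2.1 (h'.trans h.symm)
  · exact hsq.2.2.2.1.1 (h'.trans h.symm)
  · exact hsq.2.2.2.2.1.1 (h.trans h'.symm)

lemma consec {v1 v2 v3 v4 b b' : V} (hsq : G.IsSquare v1 v2 v3 v4)
    (hb : b = v1 ∨ b = v2 ∨ b = v3 ∨ b = v4)
    (hb' : b' = v1 ∨ b' = v2 ∨ b' = v3 ∨ b' = v4)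
    (hne : b ≠ b') (hstrong : G.θ b b' = 1) :
    ∃ x3 x4, (x3 = v1 ∨ x3 = v2 ∨ x3 = v3 ∨ x3 = v4) ∧
      (x4 = v1 ∨ x4 = v2 ∨ x4 = v3 ∨ x4 = v4) ∧ G.IsSquare b b' x3 x4 := by
  have anti13 := hsq.1.2
  have anti24 := hsq.2.1.2
  rcases hb with rfl | rfl | rfl | rfl <;> rcases hb' with rfl | rfl | rfl | rfl
  · exact absurd rfl hne
  · exact ⟨v3, v4, by tauto, by tauto, hsq⟩
  · rcases anti13 with h | h <;> omega
  · exact ⟨v3, v2, by tauto, by tauto, hsq.rot.rot.rot.refl'⟩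
  · exact ⟨v4, v3, by tauto, by tauto, hsq.refl'⟩
  · exact absurd rfl hne
  · exact ⟨v4, v1, by tauto, by tauto, hsq.rot⟩
  · rcases anti24 with h | h <;> omega
  · rw [G.symm] at hstrong; rcases anti13 with h | h <;> omega
  · exact ⟨v1, v4, by tauto, by tauto, hsq.rot.refl'⟩
  · exact absurd rfl hne
  · exact ⟨v1, v2, by tauto, by tauto, hsq.rot.rot⟩
  · exact ⟨v2, v3, by tauto, by tauto, hsq.rot.rot.rot⟩
  · rw [G.symm] at hstrong; rcases anti24 with h | h <;> omega
  · exact ⟨v2, v1, by tauto, by tauto, hsq.rot.rot.refl'⟩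
  · exact absurd rfl hne

lemma engine {K L K1 L1 : Set V}
    (hK : G.IsStrongClique K)
    (hKL : Disjoint K L) (hK1 : K1 ⊆ K) (hL1sub : L1 ⊆ L)
    (hL1c : G.IsStrongClique L1)
    {v : V} (hvK : v ∈ K) (hvK1 : v ∉ K1)
    {L' L'' : Set V} (hL' : L' ⊆ L1) (hL'' : L'' ⊆ L1)
    (hadj : ∀ b ∈ L', G.Adj v b) (hanti : ∀ b ∈ L'', G.AntiAdj v b)
    (hdisj : Disjoint L' L'')
    (hmeet : G.SquareMeets (K1 ∪ L1) L' L'') :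
    G.SquareMeets (K ∪ L) (K1 ∪ L1) ((K ∪ L) \ (K1 ∪ L1)) := by
  obtain ⟨v1, v2, v3, v4, hsq, hsub, ⟨b, hbS, hbL'⟩, ⟨b', hb'S, hb'L''⟩⟩ := hmeet
  have hbL1 : b ∈ L1 := hL' hbL'
  have hb'L1 : b' ∈ L1 := hL'' hb'L''
  have hne : b ≠ b' := hdisj.ne_of_mem hbL' hb'L''
  have hbb' : G.θ b b' = 1 := hL1c hbL1 hb'L1 hne
  have hbS' : b = v1 ∨ b = v2 ∨ b = v3 ∨ b = v4 := by simpa using hbS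
  have hb'S' : b' = v1 ∨ b' = v2 ∨ b' = v3 ∨ b' = v4 := by simpa using hb'S
  obtain ⟨x3, x4, hx3, _, hsq2⟩ := consec hsq hbS' hb'S' hne hbb'
  have hx3X : x3 ∈ K1 ∪ L1 := hsub (by rcases hx3 with rfl | rfl | rfl | rfl <;> simp)
  have hx3K1 : x3 ∈ K1 := by
    rcases hx3X with h | h
    · exact h
    · exfalso
      have hanti2 := hsq2.1
      have hcl : G.θ b x3 = 1 := hL1c hbL1 h hanti2.1
      rcases hanti2.2 with h' | h' <;> omega
  have hvx3ne : v ≠ x3 := fun h => hvK1 (h ▸ hx3K1)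
  have hvx3 : G.Adj v x3 := ⟨hvx3ne, Or.inl (hK hvK (hK1 hx3K1) hvx3ne)⟩
  have hsq3 : G.IsSquare v x3 b' b :=
    hsq2.extend (hadj b hbL') hvx3 (hanti b' hb'L'')
  refine ⟨v, x3, b', b, hsq3, ?_, ⟨x3, by simp, Or.inl hx3K1⟩,
    ⟨v, by simp, Or.inl hvK, ?_⟩⟩
  · intro x hx
    simp only [Set.mem_insert_iff, Set.mem_singleton_iff] at hx
    rcases hx with rfl | rfl | rfl | rfl
    · exact Or.inl hvK
    · exact Or.inl (hK1 hx3K1)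
    · exact Or.inr (hL1sub hb'L1)
    · exact Or.inr (hL1sub hbL1)
  · rintro (h | h)
    · exact hvK1 h
    · exact Set.disjoint_left.mp hKL hvK (hL1sub h)

lemma half {K L K1 L1 : Set V}
    (hK : G.IsStrongClique K) (hKL : Disjoint K L)
    (hK1 : K1 ⊆ K) (hL1sub : L1 ⊆ L)
    (hK1c : G.IsStrongClique K1) (hL1c : G.IsStrongClique L1)
    (hK1ne : K1.Nonempty)
    (hnotboth : ¬ ∃ a b : V, K1 = {a} ∧ L1 = {b})
    (hsqK : ∀ A' A'' : Set V, A'.Nonempty → A''.Nonempty → A' ∪ A'' = K1 →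
      Disjoint A' A'' → G.SquareMeets (K1 ∪ L1) A' A'')
    (hsqL : ∀ B' B'' : Set V, B'.Nonempty → B''.Nonempty → B' ∪ B'' = L1 →
      Disjoint B' B'' → G.SquareMeets (K1 ∪ L1) B' B'')
    (hnosq : ¬ G.SquareMeets (K ∪ L) (K1 ∪ L1) ((K ∪ L) \ (K1 ∪ L1)))
    {v : V} (hv : v ∈ K) (hv1 : v ∉ K1) :
    G.StronglyComplete {v} L1 ∨ G.StronglyAnticomplete {v} L1 := by
  by_contra hcon
  push_neg at hcon
  obtain ⟨hnc, hna⟩ := hcon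
  have hvne : ∀ b ∈ L1, v ≠ b := by
    intro b hb h
    subst h
    exact Set.disjoint_left.mp hKL hv (hL1sub hb)
  have hnc' : ∃ b ∈ L1, ¬ G.θ v b = 1 := by
    by_contra h
    push_neg at h
    refine hnc fun u hu b hb => ?_
    rw [Set.mem_singleton_iff] at hu
    subst hu
    exact h b hb
  have hna' : ∃ b ∈ L1, ¬ G.θ v b = -1 := by
    by_contra h
    push_neg at h
    refine hna fun u hu b hb => ?_
    rw [Set.mem_singleton_iff] at hu
    subst hu
    exact h b hb
  by_cases hE : ∃ b ∈ L1, G.θ v b = -1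
  · obtain ⟨bm, hbm, hbmt⟩ := hE
    obtain ⟨bp, hbp, hbpt⟩ := hna'
    have hmeet := hsqL {b ∈ L1 | G.θ v b ≠ -1} {b ∈ L1 | G.θ v b = -1}
      ⟨bp, hbp, hbpt⟩ ⟨bm, hbm, hbmt⟩
      (by ext x; simp only [Set.mem_union, Set.mem_setOf_eq]; tauto)
      (Set.disjoint_left.mpr fun x hx hx' => hx.2 hx'.2)
    exact hnosq (engine hK hKL hK1 hL1sub hL1c hv hv1
      (fun b hb => hb.1) (fun b hb => hb.1)
      (fun b hb => ⟨hvne b hb.1, by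
        rcases G.range_mem v b with h | h | h
        · exact Or.inl h
        · exact Or.inr h
        · exact absurd h hb.2⟩)
      (fun b hb => ⟨hvne b hb.1, Or.inr hb.2⟩)
      (Set.disjoint_left.mpr fun x hx hx' => hx.2 hx'.2) hmeet)
  · push_neg at hE
    obtain ⟨b0, hb0, hb0t⟩ := hnc'
    have hb0z : G.θ v b0 = 0 := by
      rcases G.range_mem v b0 with h | h | h
      · exact absurd h hb0t
      · exact h
      · exact absurd h (hE b0 hb0)
    by_cases hL1s : ∃ b ∈ L1, b ≠ b0
    · obtain ⟨b2, hb2, hb2ne⟩ := hL1s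
      have hadj : ∀ b ∈ L1 \ {b0}, G.θ v b = 1 := by
        intro b hb
        have hbne : b ≠ b0 := by simpa using hb.2
        rcases G.range_mem v b with h | h | h
        · exact h
        · exact absurd h (G.semi_matching v b0 b (hvne b0 hb0) (hvne b hb.1) hbne.symm hb0z)
        · exact absurd h (hE b hb.1)
      have hmeet := hsqL (L1 \ {b0}) {b0}
        ⟨b2, hb2, by simpa using hb2ne⟩ ⟨b0, rfl⟩
        (by rw [Set.diff_union_self]; exact Set.union_eq_self_of_subset_right (by simpa using hb0))
        (Set.disjoint_left.mpr fun x hx hx' => (by simpa using hx.2 : x ≠ b0) (by simpa using hx'))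
      exact hnosq (engine hK hKL hK1 hL1sub hL1c hv hv1
        (fun b hb => hb.1) (by simpa using hb0)
        (fun b hb => ⟨hvne b hb.1, Or.inl (hadj b hb)⟩)
        (fun b hb => by
          rw [Set.mem_singleton_iff] at hb
          rw [hb]
          exact ⟨hvne b0 hb0, Or.inl hb0z⟩)
        (Set.disjoint_left.mpr fun x hx hx' => (by simpa using hx.2 : x ≠ b0) (by simpa using hx'))
        hmeet)
    · push_neg at hL1s
      have hL1eq : L1 = {b0} := Set.eq_singleton_iff_unique_mem.mpr ⟨hb0, hL1s⟩
      obtain ⟨a, ha⟩ := hK1ne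
      have hex : ∃ a' ∈ K1, a' ≠ a := by
        by_contra h
        push_neg at h
        exact hnotboth ⟨a, b0, Set.eq_singleton_iff_unique_mem.mpr ⟨ha, h⟩, hL1eq⟩
      obtain ⟨a', ha', ha'ne⟩ := hex
      obtain ⟨v1, v2, v3, v4, hsq, hsub, -, -⟩ := hsqK {a} (K1 \ {a})
        ⟨a, rfl⟩ ⟨a', ha', by simpa using ha'ne⟩
        (by rw [Set.singleton_union, Set.insert_diff_singleton, Set.insert_eq_self.mpr ha])
        (Set.disjoint_left.mpr fun x hx hx' => (by simpa using hx'.2 : x ≠ a) (by simpa using hx))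
      exact no_square_clique_singleton hK1c hsq (by rwa [hL1eq] at hsub)

end Aux

end Trigraph

/-- If (A1, B1) is a square-connected homogeneous pair of strong cliques
inside a homogeneous pair of strong cliques (A, B), with A1 a proper subset of A, and no
square of G contained in A ∪ B intersects both A1 ∪ B1 and its complement in A ∪ B, then
every vertex of A \ A1 is strongly complete or strongly anticomplete to B1, and every
vertex of B \ B1 is strongly complete or strongly anticomplete to A1. -/
theorem vertex_complete_or_anticomplete {V : Type} [Fintype V] (G : Trigraph V)
    (A B A1 B1 : Set V)
    (hAB : G.HPOSC A B) (h1 : G.SquareConnected A1 B1)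
    (hA1 : A1 ⊂ A) (hB1 : B1 ⊆ B)
    (hnosq : ¬ G.SquareMeets (A ∪ B) (A1 ∪ B1) ((A ∪ B) \ (A1 ∪ B1))) :
    (∀ v ∈ A \ A1, G.StronglyComplete {v} B1 ∨ G.StronglyAnticomplete {v} B1) ∧
    (∀ v ∈ B \ B1, G.StronglyComplete {v} A1 ∨ G.StronglyAnticomplete {v} A1) := by
  obtain ⟨hAne, hBne, hABd, hAc, hBc, hABnb, hABhom⟩ := hAB
  obtain ⟨⟨hA1ne, hB1ne, hA1B1d, hA1c, hB1c, hnb, -⟩, hsqA, hsqB⟩ := h1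
  have hA1sub : A1 ⊆ A := hA1.1
  constructor
  · intro v hv
    exact Trigraph.half hAc hABd hA1sub hB1 hA1c hB1c hA1ne hnb hsqA hsqB hnosq hv.1 hv.2
  · intro v hv
    have hnosq' : ¬ G.SquareMeets (B ∪ A) (B1 ∪ A1) ((B ∪ A) \ (B1 ∪ A1)) := by
      rwa [Set.union_comm B A, Set.union_comm B1 A1]
    have hnb' : ¬ ∃ a b : V, B1 = {a} ∧ A1 = {b} := by
      rintro ⟨a, b, h1', h2'⟩
      exact hnb ⟨b, a, h2', h1'⟩
    have hsqA' : ∀ B' B'' : Set V, B'.Nonempty → B''.Nonempty → B' ∪ B'' = A1 →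
        Disjoint B' B'' → G.SquareMeets (B1 ∪ A1) B' B'' := by
      intro s t h1 h2 h3 h4
      rw [Set.union_comm B1 A1]
      exact hsqA s t h1 h2 h3 h4
    have hsqB' : ∀ B' B'' : Set V, B'.Nonempty → B''.Nonempty → B' ∪ B'' = B1 →
        Disjoint B' B'' → G.SquareMeets (B1 ∪ A1) B' B'' := by
      intro s t h1 h2 h3 h4
      rw [Set.union_comm B1 A1]
      exact hsqB s t h1 h2 h3 h4
    exact Trigraph.half hBc hABd.symm hB1 hA1sub hB1c hA1c hB1ne hnb' hsqB' hsqA' hnosq' hv.1 hv.2
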